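/- For every real r with √3/2 ≤ r ≤ 1, the maximum of A(r,x) over x ∈ [0, 1/2] is strictly greater than 0.58. -/

import Mathlib

open Set

/-- `A r x = (1/2)·x·√(3 − 4x − 4x²) + (1/2)·√(r² − x²)`. -/
noncomputable def A (r x : ℝ) : ℝ :=
  1 / 2 * x * Real.sqrt (3 - 4 * x - 4 * x ^ 2) + 1 / 2 * Real.sqrt (r ^ 2 - x ^ 2)

theorem continuous_A (r : ℝ) : Continuous (A r) := by
  unfold A
  fun_prop

theorem bddAbove_A_image_Icc (r a b : ℝ) : BddAbove (A r '' Icc a b) :=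
  (isCompact_Icc.image (continuous_A r)).bddAbove

/-- The witness `x = 3/10` is chosen so that the first radicand is a perfect square, `(6/5)²`. -/
theorem A_three_tenths (r : ℝ) : A r (3 / 10) = 9 / 50 + Real.sqrt (r ^ 2 - 9 / 100) / 2 := by
  have h : Real.sqrt (3 - 4 * (3 / 10) - 4 * (3 / 10) ^ 2) = 6 / 5 := by
    rw [Real.sqrt_eq_iff_mul_self_eq] <;> norm_num
  rw [A, h]
  ring_nf

theorem lt_A_three_tenths {r : ℝ} (hr : 3 / 4 ≤ r ^ 2) : 0.58 < A r (3 / 10) := by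
  have h : (4 / 5 : ℝ) < Real.sqrt (r ^ 2 - 9 / 100) := by
    rw [Real.lt_sqrt (by norm_num)]
    linarith
  rw [A_three_tenths]
  linarith

theorem stmt_9_general (r : ℝ) (hr : Real.sqrt 3 / 2 ≤ r) :
    0.58 < sSup (A r '' Set.Icc (0 : ℝ) (1 / 2)) := by
  have hr2 : 3 / 4 ≤ r ^ 2 := by
    calc (3 / 4 : ℝ) = (Real.sqrt 3 / 2) ^ 2 := by
          rw [div_pow, Real.sq_sqrt (by norm_num)]; norm_num
      _ ≤ r ^ 2 := pow_le_pow_left₀ (by positivity) hr 2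
  have hmem : A r (3 / 10) ∈ A r '' Icc 0 (1 / 2) := mem_image_of_mem _ ⟨by norm_num, by norm_num⟩
  exact (lt_A_three_tenths hr2).trans_le (le_csSup (bddAbove_A_image_Icc r 0 (1 / 2)) hmem)

theorem stmt_9 (r : ℝ) (hr : Real.sqrt 3 / 2 ≤ r) (hr1 : r ≤ 1) :
    0.58 < sSup (A r '' Set.Icc (0 : ℝ) (1 / 2)) :=
  stmt_9_general r hr
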